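/- arXiv:2208.06944 — 4 statements merged into one kernel-verified Lean document; each statement's English description precedes it below -/
import Mathlib

section
/- For an irrational α ∈ (0,1), the frequency resonance exponent β(α) := limsup_{|k|→∞} (−ln ‖kα‖_{ℝ/ℤ})/|k| equals limsup_{n→∞} (ln q_{n+1})/q_n, where q_n are the continued fraction denominators of α. -/
/-- Distance from a real number to the nearest integer, ‖x‖_{ℝ/ℤ}. -/
noncomputable def normZ (x : ℝ) : ℝ := |x - round x|

noncomputable def cfGauss (x : ℝ) : ℝ := Int.fract x⁻¹

/-- Partial quotients of α ∈ (0,1): `cfA α n` is the paper's a_{n+1}. -/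
noncomputable def cfA (α : ℝ) (n : ℕ) : ℤ := ⌊(cfGauss^[n] α)⁻¹⌋

noncomputable def cfQ (α : ℝ) : ℕ → ℤ
  | 0 => 1
  | 1 => cfA α 0
  | (n + 2) => cfA α (n + 1) * cfQ α (n + 1) + cfQ α n

noncomputable def cfP (α : ℝ) : ℕ → ℤ
  | 0 => 0
  | 1 => 1
  | (n + 2) => cfA α (n + 1) * cfP α (n + 1) + cfP α n

/-!
Let `e_n = q_n α - p_n`. The Gauss iterates `x_n ∈ (0,1)` satisfy `e_{n+1} = -x_{n+1} e_n`,
from which `q_{n+1} |e_n| + q_n |e_{n+1}| = 1`, so `1 / (2 q_{n+1}) ≤ |e_n| < 1 / q_{n+1}`.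
Since `(q_{n+1}, p_{n+1})` and `(q_n, p_n)` form a basis of `ℤ²` and the `e_n` alternate in sign,
`|k α - p| ≥ |e_n|` whenever `0 < |k| < q_{n+1}` (best approximation).

Hence `k = q_n` gives `-ln ‖q_n α‖ / q_n ≥ ln q_{n+1} / q_n`, while for `q_n ≤ |k| < q_{n+1}`
the quotient `-ln ‖k α‖ / |k|` is at most `(ln 2 + ln q_{n+1}) / q_n`, and `ln 2 / q_n → 0`.
-/

open Filter Topology

lemma abs_le_abs_add_of_mul_nonneg {R : Type*} [CommRing R] [LinearOrder R] [IsStrictOrderedRing R]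
    {a b : R} (h : 0 ≤ a * b) : |b| ≤ |a + b| :=
  sq_le_sq.1 (by nlinarith)

lemma abs_le_abs_mul_add_mul {Q q x y : ℤ} {e e' : ℝ} (hq : 0 ≤ q) (hne : x * Q + y * q ≠ 0)
    (hlt : |x * Q + y * q| < Q) (he : e * e' ≤ 0) : |e| ≤ |x * e' + y * e| := by
  have hQ : 0 < Q := (abs_nonneg _).trans_lt hlt
  have hy : y ≠ 0 := by
    rintro rfl
    rw [zero_mul, add_zero] at hne hlt
    rw [abs_mul, abs_of_pos hQ] at hlt
    nlinarith [Int.one_le_abs (left_ne_zero_of_mul hne)]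
  have hxy : x * y ≤ 0 := by
    by_contra! hxy
    rw [abs_lt] at hlt
    rcases pos_and_pos_or_neg_and_neg_of_mul_pos hxy with ⟨hx, hy⟩ | ⟨hx, hy⟩ <;> nlinarith
  have hy1 : (1 : ℝ) ≤ |(y : ℝ)| := by exact_mod_cast Int.one_le_abs hy
  have hxyR : (x * y : ℝ) ≤ 0 := by exact_mod_cast hxy
  calc |e| ≤ |(y : ℝ)| * |e| := le_mul_of_one_le_left (abs_nonneg _) hy1
    _ = |y * e| := (abs_mul _ _).symm
    _ ≤ |x * e' + y * e| := abs_le_abs_add_of_mul_nonneg (by nlinarith)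

lemma normZ_le_abs_sub (x : ℝ) (m : ℤ) : normZ x ≤ |x - m| := round_le x m

lemma normZ_pos {x : ℝ} (hx : Irrational x) : 0 < normZ x :=
  abs_pos.2 (sub_ne_zero.2 (hx.ne_int _))

lemma limsup_coe_add_le_of_tendsto_zero {ι : Type*} {f : Filter ι} [f.NeBot] {w : ι → ℝ}
    (hw : Tendsto w f (𝓝 0)) (v : ι → EReal) :
    limsup (fun i => (w i : EReal) + v i) f ≤ limsup v f := by
  have h : limsup (fun i => (w i : EReal)) f = 0 := (EReal.tendsto_coe.2 hw).limsup_eq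
  calc limsup (fun i => (w i : EReal) + v i) f
      ≤ limsup (fun i => (w i : EReal)) f + limsup v f :=
        EReal.limsup_add_le (by simp [h]) (by simp [h])
    _ = limsup v f := by rw [h, zero_add]

lemma irrational_cfGauss {x : ℝ} (hx : Irrational x) : Irrational (cfGauss x) :=
  hx.inv.sub_intCast _

lemma cfGauss_pos {x : ℝ} (hx : Irrational x) : 0 < cfGauss x :=
  (Int.fract_nonneg _).lt_of_ne' (irrational_cfGauss hx).ne_zero

lemma cfGauss_iterate_succ (α : ℝ) (n : ℕ) :
    cfGauss^[n + 1] α = (cfGauss^[n] α)⁻¹ - cfA α n := by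
  rw [Function.iterate_succ_apply', cfGauss, Int.fract, cfA]

lemma irrational_cfGauss_iterate {α : ℝ} (hα : Irrational α) (n : ℕ) :
    Irrational (cfGauss^[n] α) := by
  induction n with
  | zero => exact hα
  | succ n ih => rw [Function.iterate_succ_apply']; exact irrational_cfGauss ih

lemma cfGauss_iterate_succ_mem_Ioo {α : ℝ} (hα : Irrational α) (n : ℕ) :
    cfGauss^[n + 1] α ∈ Set.Ioo 0 1 := by
  rw [Function.iterate_succ_apply']
  exact ⟨cfGauss_pos (irrational_cfGauss_iterate hα n), Int.fract_lt_one _⟩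

noncomputable def cfErr (α : ℝ) (n : ℕ) : ℝ := cfQ α n * α - cfP α n

lemma cfErr_add_two (α : ℝ) (n : ℕ) :
    cfErr α (n + 2) = cfA α (n + 1) * cfErr α (n + 1) + cfErr α n := by
  simp only [cfErr, cfQ, cfP]
  push_cast
  ring

lemma cfQ_mul_cfP_sub_cfQ_mul_cfP (α : ℝ) (n : ℕ) :
    cfQ α (n + 1) * cfP α n - cfQ α n * cfP α (n + 1) = (-1) ^ (n + 1) := by
  induction n with
  | zero => simp [cfQ, cfP]
  | succ n ih =>
    rw [cfQ.eq_3, cfP.eq_3]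
    linear_combination -ih

lemma exists_int_comb_cfQ_cfErr (α : ℝ) (n : ℕ) (k p : ℤ) : ∃ x y : ℤ,
    x * cfQ α (n + 1) + y * cfQ α n = k ∧ k * α - p = x * cfErr α (n + 1) + y * cfErr α n := by
  set s : ℤ := (-1) ^ (n + 1)
  have hdet : cfQ α (n + 1) * cfP α n - cfQ α n * cfP α (n + 1) = s :=
    cfQ_mul_cfP_sub_cfQ_mul_cfP α n
  have hs : s * s = 1 := by rw [← mul_pow]; norm_num
  refine ⟨s * (cfP α n * k - cfQ α n * p), s * (cfQ α (n + 1) * p - cfP α (n + 1) * k), ?_, ?_⟩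
  · linear_combination (k * s) * hdet + k * hs
  · have hdetR : (cfQ α (n + 1) * cfP α n - cfQ α n * cfP α (n + 1) : ℝ) = s := by
      exact_mod_cast hdet
    have hsR : (s * s : ℝ) = 1 := by exact_mod_cast hs
    simp only [cfErr]
    push_cast
    linear_combination (-(k * α - p) * s) * hdetR - (k * α - p) * hsR

section ErrorTerms

variable {α : ℝ} (hα : Irrational α)
include hα

lemma cfErr_succ (n : ℕ) : cfErr α (n + 1) = -cfGauss^[n + 1] α * cfErr α n := by
  induction n with
  | zero =>
    have hα0 := hα.ne_zero
    rw [cfGauss_iterate_succ]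
    simp only [cfErr, cfQ, cfP, Function.iterate_zero, id]
    field_simp
    push_cast
    ring
  | succ n ih =>
    have hx : cfGauss^[n + 1] α ≠ 0 := (irrational_cfGauss_iterate hα _).ne_zero
    rw [cfErr_add_two, cfGauss_iterate_succ, ih]
    field_simp
    ring

lemma abs_cfErr_succ (n : ℕ) : |cfErr α (n + 1)| = cfGauss^[n + 1] α * |cfErr α n| := by
  rw [cfErr_succ hα, abs_mul, abs_neg, abs_of_pos (cfGauss_iterate_succ_mem_Ioo hα n).1]

lemma cfErr_ne_zero (n : ℕ) : cfErr α n ≠ 0 := by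
  induction n with
  | zero => simpa [cfErr, cfQ, cfP] using hα.ne_zero
  | succ n ih =>
    rw [cfErr_succ hα]
    exact mul_ne_zero (neg_ne_zero.2 (irrational_cfGauss_iterate hα _).ne_zero) ih

lemma cfErr_mul_cfErr_succ_neg (n : ℕ) : cfErr α n * cfErr α (n + 1) < 0 := by
  rw [cfErr_succ hα]
  have hx := (cfGauss_iterate_succ_mem_Ioo hα n).1
  nlinarith [mul_self_pos.2 (cfErr_ne_zero hα n)]

lemma abs_cfErr_succ_lt (n : ℕ) : |cfErr α (n + 1)| < |cfErr α n| := by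
  rw [abs_cfErr_succ hα]
  exact mul_lt_of_lt_one_left (abs_pos.2 (cfErr_ne_zero hα n)) (cfGauss_iterate_succ_mem_Ioo hα n).2

lemma cfQ_succ_mul_abs_cfErr_add (h0 : 0 < α) (n : ℕ) :
    cfQ α (n + 1) * |cfErr α n| + cfQ α n * |cfErr α (n + 1)| = 1 := by
  induction n with
  | zero =>
    rw [abs_cfErr_succ hα, cfGauss_iterate_succ]
    simp only [cfErr, cfQ, cfP, Function.iterate_zero, id]
    push_cast
    rw [one_mul, sub_zero, abs_of_pos h0]
    field_simp
    ring
  | succ n ih =>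
    have hx : cfGauss^[n + 1] α ≠ 0 := (irrational_cfGauss_iterate hα _).ne_zero
    rw [cfQ.eq_3, abs_cfErr_succ hα (n + 1), cfGauss_iterate_succ α (n + 1)]
    rw [abs_cfErr_succ hα n] at ih ⊢
    push_cast
    field_simp
    linear_combination ih

end ErrorTerms

noncomputable def resonanceRatio (α : ℝ) (k : ℤ) : ℝ := -Real.log (normZ (k * α)) / |(k : ℝ)|

noncomputable def cfGrowthRatio (α : ℝ) (n : ℕ) : ℝ := Real.log (cfQ α (n + 1)) / cfQ α n

noncomputable def cfIndex (α : ℝ) (k : ℤ) : ℕ :=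
  Nat.findGreatest (fun n => cfQ α n ≤ |k|) k.natAbs

lemma cfQ_cfIndex_le {α : ℝ} {k : ℤ} (hk : k ≠ 0) : cfQ α (cfIndex α k) ≤ |k| :=
  Nat.findGreatest_spec (P := fun n => cfQ α n ≤ |k|) (Nat.zero_le _) (Int.one_le_abs hk)

section Denominators

variable {α : ℝ} (hα : Irrational α) (h0 : 0 < α) (h1 : α < 1)
include hα h0 h1

lemma cfGauss_iterate_mem_Ioo (n : ℕ) : cfGauss^[n] α ∈ Set.Ioo 0 1 := by
  cases n with
  | zero => exact ⟨h0, h1⟩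
  | succ n => exact cfGauss_iterate_succ_mem_Ioo hα n

lemma one_le_cfA (n : ℕ) : 1 ≤ cfA α n := by
  obtain ⟨hpos, hlt⟩ := cfGauss_iterate_mem_Ioo hα h0 h1 n
  exact Int.le_floor.2 (by exact_mod_cast ((one_lt_inv₀ hpos).2 hlt).le)

lemma one_le_cfQ (n : ℕ) : 1 ≤ cfQ α n := by
  induction n using Nat.twoStepInduction with
  | zero => rfl
  | one => exact one_le_cfA hα h0 h1 0
  | more n _ ih => rw [cfQ.eq_3]; nlinarith [one_le_cfA hα h0 h1 (n + 1)]

lemma cfQ_pos (n : ℕ) : (0 : ℝ) < cfQ α n := by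
  exact_mod_cast (one_le_cfQ hα h0 h1 n).trans_lt' zero_lt_one

lemma cfQ_succ_add_le (n : ℕ) : cfQ α (n + 1) + cfQ α n ≤ cfQ α (n + 2) := by
  rw [cfQ.eq_3]
  nlinarith [one_le_cfA hα h0 h1 (n + 1), one_le_cfQ hα h0 h1 (n + 1)]

lemma cfQ_monotone : Monotone (cfQ α) := by
  refine monotone_nat_of_le_succ fun n => ?_
  cases n with
  | zero => exact one_le_cfA hα h0 h1 0
  | succ n => linarith [cfQ_succ_add_le hα h0 h1 n, one_le_cfQ hα h0 h1 n]

lemma le_cfQ (n : ℕ) : (n : ℤ) ≤ cfQ α n := by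
  induction n using Nat.twoStepInduction with
  | zero => exact Int.zero_le_ofNat 1
  | one => exact one_le_cfA hα h0 h1 0
  | more n _ ih => push_cast at ih ⊢; linarith [cfQ_succ_add_le hα h0 h1 n, one_le_cfQ hα h0 h1 n]

lemma tendsto_cfQ_atTop : Tendsto (cfQ α) atTop atTop :=
  tendsto_atTop_mono (le_cfQ hα h0 h1) tendsto_natCast_atTop_atTop

lemma tendsto_cfQ_cofinite : Tendsto (cfQ α) atTop cofinite :=
  (tendsto_cfQ_atTop hα h0 h1).mono_right (Int.cofinite_eq ▸ le_sup_right)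

lemma cfQ_succ_mul_abs_cfErr_lt_one (n : ℕ) : cfQ α (n + 1) * |cfErr α n| < 1 := by
  have he := abs_pos.2 (cfErr_ne_zero hα (n + 1))
  linarith [cfQ_succ_mul_abs_cfErr_add hα h0 n, mul_pos (cfQ_pos hα h0 h1 n) he]

lemma one_le_two_mul_cfQ_succ_mul_abs_cfErr (n : ℕ) :
    1 ≤ 2 * cfQ α (n + 1) * |cfErr α n| := by
  have hq : (cfQ α n : ℝ) ≤ cfQ α (n + 1) := by exact_mod_cast cfQ_monotone hα h0 h1 n.le_succ
  have h := mul_le_mul hq (abs_cfErr_succ_lt hα n).le (abs_nonneg _) (cfQ_pos hα h0 h1 _).le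
  linarith [cfQ_succ_mul_abs_cfErr_add hα h0 n]

lemma abs_cfErr_le_abs_mul_sub {n : ℕ} {k : ℤ} (hk0 : k ≠ 0) (hk : |k| < cfQ α (n + 1))
    (p : ℤ) :
    |cfErr α n| ≤ |k * α - p| := by
  obtain ⟨x, y, hxy, he⟩ := exists_int_comb_cfQ_cfErr α n k p
  rw [he]
  exact abs_le_abs_mul_add_mul (by linarith [one_le_cfQ hα h0 h1 n]) (hxy ▸ hk0) (hxy ▸ hk)
    (by linarith [cfErr_mul_cfErr_succ_neg hα n])

lemma cfQ_succ_mul_normZ_lt_one (n : ℕ) : cfQ α (n + 1) * normZ (cfQ α n * α) < 1 :=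
  (mul_le_mul_of_nonneg_left (normZ_le_abs_sub _ (cfP α n)) (cfQ_pos hα h0 h1 _).le).trans_lt
    (cfQ_succ_mul_abs_cfErr_lt_one hα h0 h1 n)

lemma one_le_two_mul_cfQ_succ_mul_normZ {n : ℕ} {k : ℤ} (hk0 : k ≠ 0)
    (hk : |k| < cfQ α (n + 1)) : 1 ≤ 2 * cfQ α (n + 1) * normZ (k * α) :=
  (one_le_two_mul_cfQ_succ_mul_abs_cfErr hα h0 h1 n).trans <| mul_le_mul_of_nonneg_left
    (abs_cfErr_le_abs_mul_sub hα h0 h1 hk0 hk _) (by linarith [cfQ_pos hα h0 h1 (n + 1)])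

lemma cfGrowthRatio_le_resonanceRatio (n : ℕ) :
    cfGrowthRatio α n ≤ resonanceRatio α (cfQ α n) := by
  have hq := cfQ_pos hα h0 h1 n
  have hq1 := cfQ_pos hα h0 h1 (n + 1)
  have hN := normZ_pos (hα.intCast_mul (show cfQ α n ≠ 0 by exact_mod_cast hq.ne'))
  have hlog := Real.log_nonpos (by positivity) (cfQ_succ_mul_normZ_lt_one hα h0 h1 n).le
  rw [Real.log_mul hq1.ne' hN.ne'] at hlog
  rw [cfGrowthRatio, resonanceRatio, abs_of_pos hq]
  exact div_le_div_of_nonneg_right (by linarith) hq.le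

lemma resonanceRatio_le {n : ℕ} {k : ℤ} (hk0 : k ≠ 0) (hqk : cfQ α n ≤ |k|)
    (hk : |k| < cfQ α (n + 1)) :
    resonanceRatio α k ≤ Real.log 2 / cfQ α n + cfGrowthRatio α n := by
  have hq := cfQ_pos hα h0 h1 n
  have hq1 := cfQ_pos hα h0 h1 (n + 1)
  have hN := normZ_pos (hα.intCast_mul hk0)
  have hqk' : (cfQ α n : ℝ) ≤ |(k : ℝ)| := by exact_mod_cast hqk
  have hlog := Real.log_nonneg (one_le_two_mul_cfQ_succ_mul_normZ hα h0 h1 hk0 hk)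
  rw [Real.log_mul (by positivity) hN.ne'] at hlog
  have hq1' : (1 : ℝ) ≤ cfQ α (n + 1) := by exact_mod_cast one_le_cfQ hα h0 h1 (n + 1)
  have hlog2q : 0 ≤ Real.log (2 * cfQ α (n + 1)) := Real.log_nonneg (by linarith)
  calc resonanceRatio α k ≤ Real.log (2 * cfQ α (n + 1)) / |(k : ℝ)| :=
        div_le_div_of_nonneg_right (by linarith) (abs_nonneg _)
    _ ≤ Real.log (2 * cfQ α (n + 1)) / cfQ α n := div_le_div_of_nonneg_left hlog2q hq hqk'
    _ = Real.log 2 / cfQ α n + cfGrowthRatio α n := by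
      rw [Real.log_mul two_ne_zero hq1.ne', add_div, cfGrowthRatio]

lemma le_cfIndex {m : ℕ} {k : ℤ} (hm : cfQ α m ≤ |k|) : m ≤ cfIndex α k := by
  have := (le_cfQ hα h0 h1 m).trans hm
  rw [Int.abs_eq_natAbs] at this
  exact Nat.le_findGreatest (by omega) hm

lemma lt_cfQ_cfIndex_succ (k : ℤ) : |k| < cfQ α (cfIndex α k + 1) := by
  by_contra! h
  have hbound := (le_cfQ hα h0 h1 _).trans h
  rw [Int.abs_eq_natAbs] at hbound
  exact Nat.findGreatest_is_greatest (P := fun n => cfQ α n ≤ |k|) (Nat.lt_succ_self _)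
    (show cfIndex α k + 1 ≤ k.natAbs by omega) h

lemma tendsto_cfIndex : Tendsto (cfIndex α) cofinite atTop := by
  refine tendsto_atTop.2 fun m => ?_
  have hfin : ∀ᶠ k in cofinite, cfQ α m ≤ |k| := eventually_cofinite.2 <|
    (Set.finite_Ioo (-cfQ α m) (cfQ α m)).subset fun k hk => abs_lt.1 (not_le.1 hk)
  exact hfin.mono fun k hk => le_cfIndex hα h0 h1 hk

end Denominators

/-- β(α) = limsup ln q_{n+1} / q_n. -/
theorem stmt2 (α : ℝ) (hα : Irrational α) (h0 : 0 < α) (h1 : α < 1) :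
    Filter.limsup
        (fun k : ℤ => ((-Real.log (normZ ((k : ℝ) * α)) / |(k : ℝ)| : ℝ) : EReal))
        Filter.cofinite
      = Filter.limsup
        (fun n : ℕ => ((Real.log (cfQ α (n + 1)) / (cfQ α n : ℝ) : ℝ) : EReal))
        Filter.atTop := by
  change limsup (fun k : ℤ => (resonanceRatio α k : EReal)) cofinite
    = limsup (fun n => (cfGrowthRatio α n : EReal)) atTop
  set H : ℕ → EReal := fun n => ((Real.log 2 / cfQ α n : ℝ) : EReal) + cfGrowthRatio α n
  have hlog2 : Tendsto (fun n => Real.log 2 / cfQ α n) atTop (𝓝 0) :=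
    tendsto_const_nhds.div_atTop (tendsto_intCast_atTop_atTop.comp (tendsto_cfQ_atTop hα h0 h1))
  apply le_antisymm
  · calc limsup (fun k : ℤ => (resonanceRatio α k : EReal)) cofinite
        ≤ limsup (H ∘ cfIndex α) cofinite := by
          refine limsup_le_limsup ((eventually_cofinite_ne 0).mono fun k hk => ?_)
          exact (EReal.coe_le_coe_iff.2 (resonanceRatio_le hα h0 h1 hk (cfQ_cfIndex_le hk)
            (lt_cfQ_cfIndex_succ hα h0 h1 k))).trans_eq (EReal.coe_add _ _)
      _ ≤ limsup H atTop := (tendsto_cfIndex hα h0 h1).limsup_comp_le_limsup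
      _ ≤ limsup (fun n => (cfGrowthRatio α n : EReal)) atTop :=
          limsup_coe_add_le_of_tendsto_zero hlog2 _
  · calc limsup (fun n => (cfGrowthRatio α n : EReal)) atTop
        ≤ limsup ((fun k : ℤ => (resonanceRatio α k : EReal)) ∘ cfQ α) atTop :=
          limsup_le_limsup (.of_forall fun n =>
            EReal.coe_le_coe_iff.2 (cfGrowthRatio_le_resonanceRatio hα h0 h1 n))
      _ ≤ limsup (fun k : ℤ => (resonanceRatio α k : EReal)) cofinite :=
          (tendsto_cfQ_cofinite hα h0 h1).limsup_comp_le_limsup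
end

section
/- Let α be irrational and θ ∈ ℝ such that for some integer k_j and n, ‖2θ + k_j α‖_{ℝ/ℤ} ≤ 10η/q_n where 0 < η ≤ 10⁻², and q_n, q_{n+1} are consecutive continued fraction denominators of α with q_{n+1} ≥ 2 q_n. Then for any k = k_j + l₁ q_{n-1} with integer l₁ satisfying 1 ≤ |l₁| ≤ q_n/10, one has ‖2θ + kα‖_{ℝ/ℤ} ≥ |l₁| ‖q_{n-1}α‖_{ℝ/ℤ} − 10η/q_n ≥ 1/(4 q_n). -/
open GenContFract

theorem normZ_eq_norm (x : ℝ) : normZ x = ‖(x : UnitAddCircle)‖ := UnitAddCircle.norm_eq.symm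

theorem normZ_add_intCast (x : ℝ) (m : ℤ) : normZ (x + m) = normZ x := by
  simp only [normZ, round_add_intCast, Int.cast_add, add_sub_add_right_eq_sub]

theorem normZ_of_abs_le_half {x : ℝ} (h : |x| ≤ 1 / 2) : normZ x = |x| := by
  rw [normZ_eq_norm]
  exact (AddCircle.norm_coe_eq_abs_iff (p := 1) one_ne_zero).2 (by simpa using h)

theorem normZ_intCast_mul {x : ℝ} (l : ℤ) (h : |(l : ℝ)| * normZ x ≤ 1 / 2) :
    normZ (l * x) = |(l : ℝ)| * normZ x := by
  have hsplit : (l : ℝ) * x = l * (x - round x) + ((l * round x : ℤ) : ℝ) := by push_cast; ring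
  have hround : |(l : ℝ) * (x - round x)| = |(l : ℝ)| * normZ x := abs_mul _ _
  rw [hsplit, normZ_add_intCast, normZ_of_abs_le_half (hround ▸ h), hround]

theorem normZ_sub_le_normZ_add (x y : ℝ) : normZ y - normZ x ≤ normZ (x + y) := by
  simp only [normZ_eq_norm, AddCircle.coe_add]
  have := norm_sub_le ((x : UnitAddCircle) + y) x
  rw [add_sub_cancel_left] at this
  linarith

theorem GenContFract.of_s_get?_of_irrational {x : ℝ} (hx : Irrational x) (m : ℕ) :
    (GenContFract.of x).s.get? m = some ⟨1, ⌊(cfGauss^[m] (Int.fract x))⁻¹⌋⟩ := by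
  induction m generalizing x with
  | zero => exact of_s_head (hx.sub_intCast ⌊x⌋).ne_zero
  | succ m ih =>
    have hfract : Irrational (Int.fract x) := hx.sub_intCast _
    rw [of_s_succ, ih hfract.inv]
    rfl

section ContinuedFraction

variable {α : ℝ}

theorem GenContFract.of_s_get?_eq_cfA (hα : Irrational α) (h0 : 0 < α) (h1 : α < 1) (m : ℕ) :
    (GenContFract.of α).s.get? m = some ⟨1, (cfA α m : ℝ)⟩ := by
  simpa [cfA, Int.fract_eq_self.2 ⟨h0.le, h1⟩] using of_s_get?_of_irrational hα m

theorem GenContFract.dens_eq_cfQ {g : GenContFract ℝ}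
    (hs : ∀ m, g.s.get? m = some ⟨1, (cfA α m : ℝ)⟩) : ∀ m, g.dens m = cfQ α m
  | 0 => by simp [cfQ]
  | 1 => by simp [first_den_eq (hs 0), cfQ]
  | m + 2 => by
    rw [dens_recurrence (hs (m + 1)) (dens_eq_cfQ hs m) (dens_eq_cfQ hs (m + 1)), cfQ]
    push_cast
    ring

theorem GenContFract.nums_eq_cfP {g : GenContFract ℝ} (hh : g.h = 0)
    (hs : ∀ m, g.s.get? m = some ⟨1, (cfA α m : ℝ)⟩) : ∀ m, g.nums m = cfP α m
  | 0 => by simp [hh, cfP]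
  | 1 => by simp [first_num_eq (hs 0), hh, cfP]
  | m + 2 => by
    rw [nums_recurrence (hs (m + 1)) (nums_eq_cfP hh hs m) (nums_eq_cfP hh hs (m + 1)), cfP]
    push_cast
    ring

theorem one_le_cfQ_s4 (hα : Irrational α) (h0 : 0 < α) (h1 : α < 1) (m : ℕ) :
    1 ≤ (cfQ α m : ℝ) := by
  have hfib := succ_nth_fib_le_of_nth_den (v := α) (n := m)
    (by cases m <;> simp [terminatedAt_iff_s_none, of_s_get?_eq_cfA hα h0 h1])
  rw [dens_eq_cfQ (of_s_get?_eq_cfA hα h0 h1)] at hfib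
  exact le_trans (by exact_mod_cast Nat.fib_pos.2 m.succ_pos) hfib

theorem abs_cfQ_mul_sub_cfP_le (hα : Irrational α) (h0 : 0 < α) (h1 : α < 1) (m : ℕ) :
    |cfQ α m * α - cfP α m| ≤ 1 / cfQ α (m + 1) := by
  have hs := of_s_get?_eq_cfA hα h0 h1
  have hh : (GenContFract.of α).h = 0 := by
    rw [of_h_eq_floor, Int.floor_eq_zero_iff.2 ⟨h0.le, h1⟩, Int.cast_zero]
  have hq : (0 : ℝ) < cfQ α m := one_pos.trans_le (one_le_cfQ_s4 hα h0 h1 m)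
  have happrox := abs_sub_convs_le (v := α) (n := m) (by simp [terminatedAt_iff_s_none, hs])
  rw [conv_eq_num_div_den, nums_eq_cfP hh hs, dens_eq_cfQ hs, dens_eq_cfQ hs] at happrox
  calc |cfQ α m * α - cfP α m| = |cfQ α m * (α - cfP α m / cfQ α m)| := by
        rw [mul_sub, mul_div_cancel₀ _ hq.ne']
    _ = cfQ α m * |α - cfP α m / cfQ α m| := by rw [abs_mul, abs_of_pos hq]
    _ ≤ cfQ α m * (1 / (cfQ α m * cfQ α (m + 1))) := by gcongr
    _ = 1 / cfQ α (m + 1) := by field_simp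

theorem normZ_cfQ_mul_le (hα : Irrational α) (h0 : 0 < α) (h1 : α < 1) (m : ℕ) :
    normZ (cfQ α m * α) ≤ 1 / cfQ α (m + 1) :=
  (round_le _ (cfP α m)).trans (abs_cfQ_mul_sub_cfP_le hα h0 h1 m)

end ContinuedFraction

theorem stmt4_general (α θ η : ℝ) (hα : Irrational α) (h0 : 0 < α) (h1 : α < 1)
    (hη1 : η ≤ 1 / 100)
    (n : ℕ) (hn : 1 ≤ n) (kj : ℤ)
    (hθ : normZ (2 * θ + (kj : ℝ) * α) ≤ 10 * η / (cfQ α n : ℝ))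
    (hqlow : 1 / (2 * (cfQ α n : ℝ)) ≤ normZ ((cfQ α (n - 1) : ℝ) * α))
    (k l₁ : ℤ) (hk : k = kj + l₁ * cfQ α (n - 1))
    (hl₁1 : 1 ≤ |l₁|) (hl₁2 : (|l₁| : ℝ) ≤ (cfQ α n : ℝ) / 10) :
    (|l₁| : ℝ) * normZ ((cfQ α (n - 1) : ℝ) * α) - 10 * η / (cfQ α n : ℝ)
        ≤ normZ (2 * θ + (k : ℝ) * α)
    ∧ 1 / (4 * (cfQ α n : ℝ))
        ≤ (|l₁| : ℝ) * normZ ((cfQ α (n - 1) : ℝ) * α) - 10 * η / (cfQ α n : ℝ) := by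
  set Q : ℝ := (cfQ α n : ℝ)
  set b : ℝ := normZ ((cfQ α (n - 1) : ℝ) * α)
  have hQ : 0 < Q := one_pos.trans_le (one_le_cfQ_s4 hα h0 h1 n)
  have hb : b ≤ 1 / Q := by simpa [Nat.sub_add_cancel hn] using normZ_cfQ_mul_le hα h0 h1 (n - 1)
  have hl : (1 : ℝ) ≤ |(l₁ : ℝ)| := by exact_mod_cast hl₁1
  have hlb : |(l₁ : ℝ)| * b ≤ 1 / 10 :=
    calc |(l₁ : ℝ)| * b ≤ Q / 10 * (1 / Q) := by gcongr; exact abs_nonneg _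
      _ = 1 / 10 := by field_simp
  have hsplit : 2 * θ + (k : ℝ) * α = (2 * θ + kj * α) + l₁ * (cfQ α (n - 1) * α) := by
    rw [hk]; push_cast; ring
  constructor
  · calc |(l₁ : ℝ)| * b - 10 * η / Q
          ≤ normZ (l₁ * (cfQ α (n - 1) * α)) - normZ (2 * θ + kj * α) := by
          rw [normZ_intCast_mul l₁ (by linarith)]; linarith
      _ ≤ normZ (2 * θ + (k : ℝ) * α) := hsplit ▸ normZ_sub_le_normZ_add _ _
  · have hlow : 1 / (2 * Q) ≤ |(l₁ : ℝ)| * b := hqlow.trans (le_mul_of_one_le_left (abs_nonneg _) hl)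
    have hsmall : 1 / (4 * Q) + 10 * η / Q ≤ 1 / (2 * Q) := by
      rw [div_add_div _ _ (by positivity) hQ.ne', div_le_div_iff₀ (by positivity) (by positivity)]
      nlinarith [mul_pos hQ hQ]
    linarith

/-- small divisor estimate (1) of the Proposition. -/
theorem stmt4 (α θ η : ℝ) (hα : Irrational α) (h0 : 0 < α) (h1 : α < 1)
    (hη0 : 0 < η) (hη1 : η ≤ 1 / 100)
    (n : ℕ) (hn : 1 ≤ n) (kj : ℤ)
    (hθ : normZ (2 * θ + (kj : ℝ) * α) ≤ 10 * η / (cfQ α n : ℝ))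
    (hqgrow : 2 * (cfQ α n : ℝ) ≤ (cfQ α (n + 1) : ℝ))
    (hqlow : 1 / (2 * (cfQ α n : ℝ)) ≤ normZ ((cfQ α (n - 1) : ℝ) * α))
    (k l₁ : ℤ) (hk : k = kj + l₁ * cfQ α (n - 1))
    (hl₁1 : 1 ≤ |l₁|) (hl₁2 : (|l₁| : ℝ) ≤ (cfQ α n : ℝ) / 10) :
    (|l₁| : ℝ) * normZ ((cfQ α (n - 1) : ℝ) * α) - 10 * η / (cfQ α n : ℝ)
        ≤ normZ (2 * θ + (k : ℝ) * α)
    ∧ 1 / (4 * (cfQ α n : ℝ))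
        ≤ (|l₁| : ℝ) * normZ ((cfQ α (n - 1) : ℝ) * α) - 10 * η / (cfQ α n : ℝ) :=
  stmt4_general α θ η hα h0 h1 hη1 n hn kj hθ hqlow k l₁ hk hl₁1 hl₁2
end

section
/- Define a₁ = ⌊2/μ⌋ + 10 and inductively q_n = a_n q_{n-1} + q_{n-2} (q_{-1}=0, q_0=1), a_{n+1} = ⌊exp(μ q_n)⌋, for a fixed 0 < μ < ∞. Let α = [a₁, a₂, ...] be the irrational number with these partial quotients. Then β(α) := limsup_n (ln q_{n+1})/q_n = μ. -/
/-!
The partial quotient `a (n + 1) = ⌊exp (μ q n)⌋` is so large that it dominates the recurrence: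
`exp (μ q n) / 2 ≤ q (n + 1) ≤ 2 exp (μ q n) q n`. Taking logarithms and dividing by `q n`,
which tends to infinity, squeezes `log q (n + 1) / q n` to `μ`; so the ratio actually converges
and its limsup is `μ`.
-/

open Filter Topology Real

section Recurrence

variable {a q : ℕ → ℤ}

theorem one_le_of_recurrence (hq0 : q 0 = 1) (hq1 : 1 ≤ q 1)
    (hqrec : ∀ n, q (n + 2) = a (n + 2) * q (n + 1) + q n) (ha : ∀ n, 0 ≤ a (n + 2))
    (n : ℕ) :
    1 ≤ q n := by
  induction n using Nat.twoStepInduction with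
  | zero => omega
  | one => exact hq1
  | more n ih _ => rw [hqrec]; nlinarith [ha n]

theorem natCast_le_of_recurrence (hq0 : q 0 = 1) (hq1 : 1 ≤ q 1)
    (hqrec : ∀ n, q (n + 2) = a (n + 2) * q (n + 1) + q n) (ha : ∀ n, 1 ≤ a (n + 2))
    (n : ℕ) :
    (n : ℤ) ≤ q n := by
  have hq := one_le_of_recurrence hq0 hq1 hqrec fun n => zero_le_one.trans (ha n)
  induction n using Nat.twoStepInduction with
  | zero => omega
  | one => exact hq1
  | more n _ ih => rw [hqrec]; push_cast at ih ⊢; nlinarith [ha n, hq n, hq (n + 1)]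

theorem le_succ_of_recurrence (hq0 : q 0 = 1) (hq1 : 1 ≤ q 1)
    (hqrec : ∀ n, q (n + 2) = a (n + 2) * q (n + 1) + q n) (ha : ∀ n, 1 ≤ a (n + 2)) :
    ∀ n, q n ≤ q (n + 1)
  | 0 => by rw [zero_add, hq0]; exact hq1
  | n + 1 => by
    have hq := one_le_of_recurrence hq0 hq1 hqrec fun n => zero_le_one.trans (ha n)
    rw [hqrec]
    nlinarith [ha n, hq n, hq (n + 1)]

end Recurrence

theorem div_two_le_floor_mul_add {E Q P : ℝ} (hE : 2 ≤ E) (hQ : 1 ≤ Q) (hP : 0 ≤ P) :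
    E / 2 ≤ ⌊E⌋ * Q + P := by
  have hfloor : E - 1 ≤ ⌊E⌋ := (Int.sub_one_lt_floor E).le
  nlinarith

theorem floor_mul_add_le {E Q P : ℝ} (hE : 1 ≤ E) (hQ : 0 ≤ Q) (hPQ : P ≤ Q) :
    ⌊E⌋ * Q + P ≤ 2 * E * Q := by
  have hfloor : (⌊E⌋ : ℝ) ≤ E := Int.floor_le E
  nlinarith

theorem tendsto_log_div_of_exp_bounds {ι : Type*} {l : Filter ι} {μ : ℝ} {u v : ι → ℝ}
    (hu : Tendsto u l atTop) (hlow : ∀ᶠ i in l, exp (μ * u i) / 2 ≤ v i)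
    (hup : ∀ᶠ i in l, v i ≤ 2 * exp (μ * u i) * u i) :
    Tendsto (fun i => log (v i) / u i) l (𝓝 μ) := by
  have hlog2 : Tendsto (fun i => log 2 / u i) l (𝓝 0) := tendsto_const_nhds.div_atTop hu
  have hlog : Tendsto (fun i => log (u i) / u i) l (𝓝 0) := by
    simpa [Function.comp_def] using
      (isLittleO_log_id_atTop.comp_tendsto hu).tendsto_div_nhds_zero
  refine tendsto_of_tendsto_of_tendsto_of_le_of_le'
    (g := fun i => μ - log 2 / u i) (h := fun i => μ + (log 2 / u i + log (u i) / u i))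
    (by simpa using tendsto_const_nhds.sub hlog2)
    (by simpa using tendsto_const_nhds.add (hlog2.add hlog)) ?_ ?_
  · filter_upwards [hlow, hu.eventually_gt_atTop 0] with i hv hpos
    have : μ * u i - log 2 ≤ log (v i) := by
      simpa [log_div, log_exp] using log_le_log (by positivity) hv
    rw [le_div_iff₀ hpos]
    field_simp
    linarith
  · filter_upwards [hlow, hup, hu.eventually_gt_atTop 0] with i hv hv' hpos
    have : log (v i) ≤ log 2 + μ * u i + log (u i) := by
      simpa [log_mul, log_exp, hpos.ne'] using
        log_le_log ((by positivity : 0 < exp (μ * u i) / 2).trans_le hv) hv'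
    rw [div_le_iff₀ hpos]
    field_simp
    linarith

/-- the constructed α has β(α) = limsup ln q_{n+1}/q_n = μ. -/
theorem stmt14 (μ : ℝ) (hμ : 0 < μ) (a : ℕ → ℤ) (q : ℕ → ℤ)
    (ha1 : a 1 = ⌊2 / μ⌋ + 10)
    (hq0 : q 0 = 1) (hq1 : q 1 = a 1)
    (hqrec : ∀ n : ℕ, q (n + 2) = a (n + 2) * q (n + 1) + q n)
    (harec : ∀ n : ℕ, 1 ≤ n → a (n + 1) = ⌊Real.exp (μ * (q n : ℝ))⌋) :
    Filter.limsup (fun n : ℕ => Real.log (q (n + 1)) / (q n : ℝ)) Filter.atTop = μ := by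
  have haq (n : ℕ) : a (n + 2) = ⌊exp (μ * q (n + 1))⌋ := harec (n + 1) (by omega)
  have hq1' : 1 ≤ q 1 := by
    have : 0 ≤ ⌊2 / μ⌋ := Int.floor_nonneg.2 (by positivity)
    omega
  have hq : ∀ n, 1 ≤ q n := one_le_of_recurrence hq0 hq1' hqrec fun n => by
    rw [haq]; exact Int.floor_nonneg.2 (exp_pos _).le
  have ha : ∀ n, 1 ≤ a (n + 2) := fun n => by
    rw [haq]
    exact Int.le_floor.2 (by push_cast; exact one_le_exp (by positivity [hq (n + 1)]))
  have hqtop : Tendsto (fun n => (q n : ℝ)) atTop atTop :=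
    tendsto_atTop_mono (fun n => by exact_mod_cast natCast_le_of_recurrence hq0 hq1' hqrec ha n)
      tendsto_natCast_atTop_atTop
  have hqrecR (n : ℕ) : (q (n + 2) : ℝ) = ⌊exp (μ * q (n + 1))⌋ * q (n + 1) + q n := by
    rw [hqrec, haq]; push_cast; rfl
  have hqtop' : Tendsto (fun n => (q (n + 1) : ℝ)) atTop atTop :=
    hqtop.comp (tendsto_add_atTop_nat 1)
  have hexp : ∀ᶠ n in atTop, 2 ≤ exp (μ * q (n + 1)) :=
    (tendsto_exp_atTop.comp (hqtop'.const_mul_atTop hμ)).eventually_ge_atTop 2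
  have hlim : Tendsto (fun n => log (q (n + 2)) / (q (n + 1) : ℝ)) atTop (𝓝 μ) := by
    refine tendsto_log_div_of_exp_bounds hqtop' ?_ ?_
    · filter_upwards [hexp] with n hE
      rw [hqrecR]
      exact div_two_le_floor_mul_add hE (by exact_mod_cast hq (n + 1))
        (by exact_mod_cast zero_le_one.trans (hq n))
    · filter_upwards [hexp] with n hE
      rw [hqrecR]
      exact floor_mul_add_le (by linarith) (by exact_mod_cast zero_le_one.trans (hq (n + 1)))
        (by exact_mod_cast le_succ_of_recurrence hq0 hq1' hqrec ha n)
  exact ((tendsto_add_atTop_iff_nat 1).1 hlim).limsup_eq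
end

section
/- Let α be irrational with continued fraction denominators q_n, let θ be as in the paper's construction, and let k_j, n = 2j−1 be as above with η q_{n+1} ≥ 10¹⁷ q_n. Consider the two intervals of integers I₁ = [−s q_{n−n₀}, s q_{n−n₀} − 1] and I₂ = [ℓq_n + k_j − s q_{n−n₀}, ℓq_n + k_j + s q_{n−n₀} − 1] with s q_{n−n₀} ≤ k_j/2 − 2εq_n and |ℓ| ≤ 20 b_{n+1}/q_n where b_{n+1} = 10⁻⁷ η q_{n+1}. Then for any distinct j₁, j₂ ∈ I₁ ∪ I₂ one can write j₁ − j₂ = l₁ q_n + l₂ with 1 ≤ l₂ < q_n and |l₁| ≤ 40 b_{n+1}/q_n + 4, and hence ‖(j₁ − j₂)α‖_{ℝ/ℤ} ≥ 1/(4 q_n). -/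
/-!
With `S = s q_{n-n₀}`, both blocks have length `2S`, where `2S ≤ kⱼ/4` and `kⱼ ≤ q_n/50`.
So two points of the same block differ by less than `q_n`, and points of different blocks
differ by `±(ℓ q_n + kⱼ) + e` with `|e| < 2S`. In every case the difference is `l₁ q_n + l₂`
with `1 ≤ l₂ < q_n` and `|l₁| ≤ |ℓ| + 1`, which is small enough for the small-divisor estimate.
-/

open Set

lemma exists_eq_mul_add_of_mem_blocks {Q S k ℓ j₁ j₂ : ℤ} (hSk : 2 * S ≤ k) (hkQ : k + 2 * S ≤ Q)
    (h₁ : j₁ ∈ Icc (-S) (S - 1) ∪ Icc (ℓ * Q + k - S) (ℓ * Q + k + S - 1))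
    (h₂ : j₂ ∈ Icc (-S) (S - 1) ∪ Icc (ℓ * Q + k - S) (ℓ * Q + k + S - 1)) (hne : j₁ ≠ j₂) :
    ∃ m t : ℤ, j₁ - j₂ = m * Q + t ∧ 1 ≤ t ∧ t < Q ∧ |m| ≤ |ℓ| + 1 := by
  have hℓ : |-ℓ - 1| ≤ |ℓ| + 1 := by
    rw [show -ℓ - 1 = -(ℓ + 1) by ring, abs_neg]
    simpa using abs_add_le ℓ 1
  rcases h₁ with ⟨h₁l, h₁u⟩ | ⟨h₁l, h₁u⟩ <;> rcases h₂ with ⟨h₂l, h₂u⟩ | ⟨h₂l, h₂u⟩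
  · rcases hne.lt_or_gt with h | h
    · exact ⟨-1, j₁ - j₂ + Q, by ring, by omega, by omega, by simp⟩
    · exact ⟨0, j₁ - j₂, by ring, by omega, by omega, by rw [abs_zero]; positivity⟩
  · exact ⟨-ℓ - 1, j₁ - j₂ + ℓ * Q + Q, by ring, by omega, by omega, hℓ⟩
  · exact ⟨ℓ, j₁ - j₂ - ℓ * Q, by ring, by omega, by omega, by linarith⟩
  · rcases hne.lt_or_gt with h | h
    · exact ⟨-1, j₁ - j₂ + Q, by ring, by omega, by omega, by simp⟩
    · exact ⟨0, j₁ - j₂, by ring, by omega, by omega, by rw [abs_zero]; positivity⟩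

lemma abs_le_div_of_abs_le_abs_add_one {η Q Q' l m : ℝ} (hη0 : 0 < η) (hη : η ≤ 1 / 100)
    (hQ : 0 < Q) (hgap : 10 ^ 17 * Q ≤ η * Q') (hl : |l| ≤ 20 * ((1 / 10 ^ 7) * η * Q') / Q)
    (hm : |m| ≤ |l| + 1) :
    |m| ≤ Q' / (10 * Q) := by
  have hQ' : 0 < Q' := pos_of_mul_pos_right (by linarith) hη0.le
  rw [le_div_iff₀ (by positivity)]
  have hlQ : |l| * Q ≤ 20 * ((1 / 10 ^ 7) * η * Q') := (le_div_iff₀ hQ).mp hl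
  nlinarith [mul_le_mul_of_nonneg_right hm hQ.le]

theorem stmt15_general (α η ε : ℝ)
    (hη0 : 0 < η) (hη1 : η ≤ 1 / 100) (hε : 0 < ε)
    (n : ℕ)
    (kj : ℤ) (hkj0 : 0 < kj) (hkj : (kj : ℝ) ≤ 2 * η * (cfQ α n : ℝ))
    (n₀ : ℕ) (s : ℤ)
    (hs2 : 2 * (s : ℝ) * (cfQ α (n - n₀) : ℝ) ≤ (kj : ℝ) / 2 - 2 * ε * (cfQ α n : ℝ))
    (ℓ : ℤ)
    (hℓ : |(ℓ : ℝ)| ≤ 20 * ((1 / 10 ^ 7) * η * (cfQ α (n + 1) : ℝ)) / (cfQ α n : ℝ))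
    (hgap : 10 ^ 17 * (cfQ α n : ℝ) ≤ η * (cfQ α (n + 1) : ℝ))
    (hprop5 : ∀ l₁ l₂ : ℤ, |(l₁ : ℝ)| ≤ (cfQ α (n + 1) : ℝ) / (10 * (cfQ α n : ℝ)) →
      1 ≤ l₂ → l₂ < cfQ α n →
      1 / (4 * (cfQ α n : ℝ)) ≤ normZ (((l₁ * cfQ α n + l₂ : ℤ) : ℝ) * α)) :
    ∀ j₁ j₂ : ℤ,
      j₁ ∈ Set.Icc (-(s * cfQ α (n - n₀))) (s * cfQ α (n - n₀) - 1)
          ∪ Set.Icc (ℓ * cfQ α n + kj - s * cfQ α (n - n₀))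
              (ℓ * cfQ α n + kj + s * cfQ α (n - n₀) - 1) →
      j₂ ∈ Set.Icc (-(s * cfQ α (n - n₀))) (s * cfQ α (n - n₀) - 1)
          ∪ Set.Icc (ℓ * cfQ α n + kj - s * cfQ α (n - n₀))
              (ℓ * cfQ α n + kj + s * cfQ α (n - n₀) - 1) →
      j₁ ≠ j₂ →
      ∃ l₁ l₂ : ℤ, j₁ - j₂ = l₁ * cfQ α n + l₂ ∧ 1 ≤ l₂ ∧ l₂ < cfQ α n
        ∧ |(l₁ : ℝ)| ≤ 40 * ((1 / 10 ^ 7) * η * (cfQ α (n + 1) : ℝ)) / (cfQ α n : ℝ) + 4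
        ∧ 1 / (4 * (cfQ α n : ℝ)) ≤ normZ (((j₁ - j₂ : ℤ) : ℝ) * α) := by
  intro j₁ j₂ h₁ h₂ hne
  have hQ : (0 : ℝ) < cfQ α n :=
    pos_of_mul_pos_right ((Int.cast_pos.mpr hkj0).trans_le hkj) (by linarith)
  have h4S : 4 * (s * cfQ α (n - n₀) : ℝ) ≤ kj := by nlinarith [mul_pos hε hQ]
  have hkjQ : (kj : ℝ) ≤ cfQ α n / 50 := by nlinarith [mul_le_mul_of_nonneg_right hη1 hQ.le]
  have hSk : 2 * (s * cfQ α (n - n₀)) ≤ kj := by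
    have : (2 * (s * cfQ α (n - n₀)) : ℝ) ≤ kj := by
      linarith [(Int.cast_pos.mpr hkj0 : (0 : ℝ) < kj)]
    exact_mod_cast this
  have hkQ : kj + 2 * (s * cfQ α (n - n₀)) ≤ cfQ α n := by
    have : (kj + 2 * (s * cfQ α (n - n₀)) : ℝ) ≤ cfQ α n := by linarith
    exact_mod_cast this
  obtain ⟨m, t, heq, ht1, htQ, hm⟩ := exists_eq_mul_add_of_mem_blocks hSk hkQ h₁ h₂ hne
  have hmℝ : |(m : ℝ)| ≤ |(ℓ : ℝ)| + 1 := by exact_mod_cast hm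
  refine ⟨m, t, heq, ht1, htQ, ?_, ?_⟩
  · have hdouble : 40 * ((1 / 10 ^ 7) * η * (cfQ α (n + 1) : ℝ)) / (cfQ α n : ℝ)
        = 2 * (20 * ((1 / 10 ^ 7) * η * (cfQ α (n + 1) : ℝ)) / (cfQ α n : ℝ)) := by ring
    linarith [abs_nonneg (ℓ : ℝ)]
  rw [heq]
  exact hprop5 m t (abs_le_div_of_abs_le_abs_add_one hη0 hη1 hQ hgap hℓ hmℝ) ht1 htQ

/-- decomposition and small-divisor bound for differences of points in I₁ ∪ I₂. -/
theorem stmt15 (α η ε : ℝ) (hα : Irrational α) (h0 : 0 < α) (h1 : α < 1)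
    (hη0 : 0 < η) (hη1 : η ≤ 1 / 100) (hε : 0 < ε)
    (j n : ℕ) (hn : n = 2 * j - 1) (hj : 1 ≤ j)
    (kj : ℤ) (hkj0 : 0 < kj) (hkj : (kj : ℝ) ≤ 2 * η * (cfQ α n : ℝ))
    (n₀ : ℕ) (hn₀ : n₀ ≤ n) (s : ℤ) (hs : 1 ≤ s)
    (hs2 : 2 * (s : ℝ) * (cfQ α (n - n₀) : ℝ) ≤ (kj : ℝ) / 2 - 2 * ε * (cfQ α n : ℝ))
    (ℓ : ℤ)
    (hℓ : |(ℓ : ℝ)| ≤ 20 * ((1 / 10 ^ 7) * η * (cfQ α (n + 1) : ℝ)) / (cfQ α n : ℝ))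
    (hgap : 10 ^ 17 * (cfQ α n : ℝ) ≤ η * (cfQ α (n + 1) : ℝ))
    (hprop5 : ∀ l₁ l₂ : ℤ, |(l₁ : ℝ)| ≤ (cfQ α (n + 1) : ℝ) / (10 * (cfQ α n : ℝ)) →
      1 ≤ l₂ → l₂ < cfQ α n →
      1 / (4 * (cfQ α n : ℝ)) ≤ normZ (((l₁ * cfQ α n + l₂ : ℤ) : ℝ) * α)) :
    ∀ j₁ j₂ : ℤ,
      j₁ ∈ Set.Icc (-(s * cfQ α (n - n₀))) (s * cfQ α (n - n₀) - 1)
          ∪ Set.Icc (ℓ * cfQ α n + kj - s * cfQ α (n - n₀))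
              (ℓ * cfQ α n + kj + s * cfQ α (n - n₀) - 1) →
      j₂ ∈ Set.Icc (-(s * cfQ α (n - n₀))) (s * cfQ α (n - n₀) - 1)
          ∪ Set.Icc (ℓ * cfQ α n + kj - s * cfQ α (n - n₀))
              (ℓ * cfQ α n + kj + s * cfQ α (n - n₀) - 1) →
      j₁ ≠ j₂ →
      ∃ l₁ l₂ : ℤ, j₁ - j₂ = l₁ * cfQ α n + l₂ ∧ 1 ≤ l₂ ∧ l₂ < cfQ α n
        ∧ |(l₁ : ℝ)| ≤ 40 * ((1 / 10 ^ 7) * η * (cfQ α (n + 1) : ℝ)) / (cfQ α n : ℝ) + 4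
        ∧ 1 / (4 * (cfQ α n : ℝ)) ≤ normZ (((j₁ - j₂ : ℤ) : ℝ) * α) :=
  stmt15_general α η ε hη0 hη1 hε n kj hkj0 hkj n₀ s hs2 ℓ hℓ hgap hprop5
end
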